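/- For the factor score map η(τ_free, Λ_free, H; z) = (−H, I_k + H Λ_free)(z − (τ_free, 0)ᵀ), the difference between the scores computed at estimated parameters (τ̂, Λ̂, Ĥ) and at true parameters (τ, Λ, H) admits the exact linear representation η̂ᵢ − η̃ᵢ = B̂ᵢ (Υ̂₁ − Υ₁) with B̂ᵢ = (H, H(qᵢᵀ ⊗ I_{p−k}), −(pᵢᵀ ⊗ I_k)) for suitable vectors qᵢ, pᵢ that are affine functions of zᵢ; consequently, if Υ̂₁ − Υ₁ = O_p(N^{−1/2}), then η̂ᵢ − η̃ᵢ = O_p(N^{−1/2}). -/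

import Mathlib

open MeasureTheory Matrix Filter

/-! Writing `z = (x, q)` and `p = (x - τ) - Λ q`, the score is `η = q - H p`. Hence
`η̂ - η̃ = H (p - p̂) - (Ĥ - H) p̂` with `p - p̂ = (τ̂ - τ) + (Λ̂ - Λ) q`, and the norm of this is at
most a constant (depending only on the true `H`) times the norm of the parameter errors, so the
`O_p(N^{-1/2})` rate passes to the scores. -/

section FactorScore

variable {R : Type*} [Ring R] {n m : Type*} [Fintype n] [Fintype m] [DecidableEq m]

def factorScore (τ : n → R) (Λ : Matrix n m R) (H : Matrix m n R) (z : n ⊕ m → R) : m → R :=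
  fromCols (-H) (1 + H * Λ) *ᵥ (z - Sum.elim τ 0)

/-- The paper's `p = (I, -Λ) (z - (τ, 0))`. -/
def factorResidual (τ : n → R) (Λ : Matrix n m R) (z : n ⊕ m → R) : n → R :=
  (z ∘ Sum.inl - τ) - Λ *ᵥ (z ∘ Sum.inr)

theorem factorScore_eq (τ : n → R) (Λ : Matrix n m R) (H : Matrix m n R) (z : n ⊕ m → R) :
    factorScore τ Λ H z = z ∘ Sum.inr - H *ᵥ factorResidual τ Λ z := by
  have hsplit : z - Sum.elim τ 0 = Sum.elim (z ∘ Sum.inl - τ) (z ∘ Sum.inr) := by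
    funext x
    cases x <;> simp
  rw [factorScore, factorResidual, hsplit, fromCols_mulVec_sumElim, neg_mulVec, add_mulVec,
    one_mulVec, mulVec_sub, mulVec_sub, mulVec_sub, ← mulVec_mulVec]
  abel

theorem factorScore_sub_factorScore (τ τ' : n → R) (Λ Λ' : Matrix n m R) (H H' : Matrix m n R)
    (z : n ⊕ m → R) :
    factorScore τ' Λ' H' z - factorScore τ Λ H z
      = H *ᵥ (τ' - τ) + H *ᵥ ((Λ' - Λ) *ᵥ (z ∘ Sum.inr)) - (H' - H) *ᵥ factorResidual τ' Λ' z := by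
  have hresidual : factorResidual τ Λ z - factorResidual τ' Λ' z
      = (τ' - τ) + (Λ' - Λ) *ᵥ (z ∘ Sum.inr) := by
    rw [factorResidual, factorResidual, sub_mulVec]
    abel
  calc factorScore τ' Λ' H' z - factorScore τ Λ H z
      = H *ᵥ (factorResidual τ Λ z - factorResidual τ' Λ' z)
        - (H' - H) *ᵥ factorResidual τ' Λ' z := by
        rw [factorScore_eq, factorScore_eq, mulVec_sub, sub_mulVec]
        abel
    _ = _ := by rw [hresidual, mulVec_add]

end FactorScore

theorem Matrix.exists_pos_norm_mulVec_add_mulVec_sub_le {m n : Type*} [Fintype m] [Fintype n]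
    (H : Matrix m n ℝ) :
    ∃ K > 0, ∀ (a b : n → ℝ) (c : m → ℝ), ‖H *ᵥ a + H *ᵥ b - c‖ ≤ K * (‖a‖ + ‖b‖ + ‖c‖) := by
  set f := LinearMap.toContinuousLinearMap H.mulVecLin
  refine ⟨‖f‖ + 1, by positivity, fun a b c => ?_⟩
  have hf : ∀ x, ‖H *ᵥ x‖ ≤ (‖f‖ + 1) * ‖x‖ := fun x =>
    (f.le_opNorm x).trans (by gcongr; linarith)
  calc ‖H *ᵥ a + H *ᵥ b - c‖ ≤ ‖H *ᵥ a‖ + ‖H *ᵥ b‖ + ‖c‖ := norm_sub_le_of_le (norm_add_le _ _) le_rfl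
    _ ≤ (‖f‖ + 1) * ‖a‖ + (‖f‖ + 1) * ‖b‖ + (‖f‖ + 1) * ‖c‖ := by
        gcongr
        · exact hf a
        · exact hf b
        · exact le_mul_of_one_le_left (norm_nonneg c) (by linarith [norm_nonneg f])
    _ = (‖f‖ + 1) * (‖a‖ + ‖b‖ + ‖c‖) := by ring

/-- `X N = O_p(1)`; for `X N = √N * Y N` this says `Y N = O_p(N^{-1/2})`. -/
def BoundedInProbability {Ω : Type*} [MeasurableSpace Ω] (μ : Measure Ω) (X : ℕ → Ω → ℝ) :
    Prop :=
  ∀ ε > (0 : ℝ), ∃ C : ℝ, ∀ᶠ N : ℕ in atTop, μ {ω | C ≤ X N ω} ≤ ENNReal.ofReal ε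

theorem BoundedInProbability.of_le_const_mul {Ω : Type*} [MeasurableSpace Ω] {μ : Measure Ω}
    {X Y : ℕ → Ω → ℝ} (hY : BoundedInProbability μ Y) {K : ℝ} (hK : 0 < K)
    (hXY : ∀ N ω, X N ω ≤ K * Y N ω) : BoundedInProbability μ X := by
  intro ε hε
  obtain ⟨C, hC⟩ := hY ε hε
  refine ⟨K * C, hC.mono fun N hN => (μ.mono fun ω hω => ?_).trans hN⟩
  exact le_of_mul_le_mul_left (le_trans hω (hXY N ω)) hK

theorem factor_score_linear_representation_general
    {Ω : Type*} [MeasurableSpace Ω] (μ : Measure Ω)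
    {pk k : ℕ}
    -- true parameters
    (τfree : Fin pk → ℝ) (Λfree : Matrix (Fin pk) (Fin k) ℝ)
    (H : Matrix (Fin k) (Fin pk) ℝ)
    -- estimated parameters (random, indexed by sample size N)
    (τhat : ℕ → Ω → Fin pk → ℝ)
    (Λhat : ℕ → Ω → Matrix (Fin pk) (Fin k) ℝ)
    (Hhat : ℕ → Ω → Matrix (Fin k) (Fin pk) ℝ)
    -- observed indicator vector, split into first p−k and last k coordinates
    (z : Ω → Fin pk ⊕ Fin k → ℝ)
    -- the factor score map
    (score : (Fin pk → ℝ) → Matrix (Fin pk) (Fin k) ℝ →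
      Matrix (Fin k) (Fin pk) ℝ → (Fin pk ⊕ Fin k → ℝ) → Fin k → ℝ)
    (hscore : ∀ t L Hm v, score t L Hm v =
      (Matrix.fromCols (-Hm) (1 + Hm * L)).mulVec (v - Sum.elim t 0))
    -- q = last k coordinates of z, p̂ = (I, −Λ̂)(z − (τ̂,0)ᵀ)
    (qv : Ω → Fin k → ℝ) (hq : ∀ ω i, qv ω i = z ω (Sum.inr i))
    (phat : ℕ → Ω → Fin pk → ℝ)
    (hphat : ∀ N ω i, phat N ω i =
      (z ω (Sum.inl i) - τhat N ω i) - ((Λhat N ω).mulVec (qv ω)) i) :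
    -- exact linear representation in the parameter differences
    (∀ N ω, score (τhat N ω) (Λhat N ω) (Hhat N ω) (z ω)
        - score τfree Λfree H (z ω)
      = H.mulVec (τhat N ω - τfree)
        + H.mulVec ((Λhat N ω - Λfree).mulVec (qv ω))
        - (Hhat N ω - H).mulVec (phat N ω)) ∧
    -- O_p(N^{−1/2}) propagation
    ((∀ ε > (0 : ℝ), ∃ C : ℝ, ∀ᶠ N : ℕ in atTop,
        μ {ω | C ≤ Real.sqrt N * (‖τhat N ω - τfree‖
          + ‖(Λhat N ω - Λfree).mulVec (qv ω)‖
          + ‖(Hhat N ω - H).mulVec (phat N ω)‖)} ≤ ENNReal.ofReal ε) →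
      ∀ ε > (0 : ℝ), ∃ C : ℝ, ∀ᶠ N : ℕ in atTop,
        μ {ω | C ≤ Real.sqrt N *
          ‖score (τhat N ω) (Λhat N ω) (Hhat N ω) (z ω)
            - score τfree Λfree H (z ω)‖} ≤ ENNReal.ofReal ε) := by
  have hscore' : score = factorScore := by
    funext t L Hm v
    exact hscore t L Hm v
  have hqv : qv = fun ω => z ω ∘ Sum.inr := funext fun ω => funext (hq ω)
  have hphat' : phat = fun N ω => factorResidual (τhat N ω) (Λhat N ω) (z ω) := by
    subst hqv
    exact funext fun N => funext fun ω => funext (hphat N ω)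
  have hlin : ∀ N ω, score (τhat N ω) (Λhat N ω) (Hhat N ω) (z ω) - score τfree Λfree H (z ω)
      = H *ᵥ (τhat N ω - τfree) + H *ᵥ ((Λhat N ω - Λfree) *ᵥ qv ω)
        - (Hhat N ω - H) *ᵥ phat N ω := by
    intro N ω
    rw [hscore', hqv, hphat', factorScore_sub_factorScore]
  refine ⟨hlin, fun hrate => ?_⟩
  obtain ⟨K, hK, hbound⟩ := H.exists_pos_norm_mulVec_add_mulVec_sub_le
  refine BoundedInProbability.of_le_const_mul hrate hK fun N ω => ?_
  rw [hlin, mul_left_comm]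
  gcongr
  exact hbound _ _ _

/-- For the factor score map
η(τ_free, Λ_free, H; z) = (−H, I + HΛ_free)(z − (τ_free,0)ᵀ), the difference
between scores at estimated and true parameters admits the exact linear
representation
η̂ − η̃ = H (τ̂_free − τ_free) + H (Λ̂_free − Λ_free) q − (Ĥ − H) p̂,
linear in (Δτ_free, vec ΔΛ_free, vec ΔH) with coefficient matrix
B̂ = (H, H(qᵀ ⊗ I_{p−k}), −(p̂ᵀ ⊗ I_k)), where q = last k coords of z and
p̂ = (I, −Λ̂_free)(z − (τ̂_free,0)ᵀ); hence if the parameter estimates are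
O_p(N^{−1/2})-consistent, so are the factor scores. -/
theorem factor_score_linear_representation
    {Ω : Type*} [MeasurableSpace Ω] (μ : Measure Ω) [IsProbabilityMeasure μ]
    {pk k : ℕ}
    -- true parameters
    (τfree : Fin pk → ℝ) (Λfree : Matrix (Fin pk) (Fin k) ℝ)
    (H : Matrix (Fin k) (Fin pk) ℝ)
    -- estimated parameters (random, indexed by sample size N)
    (τhat : ℕ → Ω → Fin pk → ℝ)
    (Λhat : ℕ → Ω → Matrix (Fin pk) (Fin k) ℝ)
    (Hhat : ℕ → Ω → Matrix (Fin k) (Fin pk) ℝ)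
    -- observed indicator vector, split into first p−k and last k coordinates
    (z : Ω → Fin pk ⊕ Fin k → ℝ)
    -- the factor score map
    (score : (Fin pk → ℝ) → Matrix (Fin pk) (Fin k) ℝ →
      Matrix (Fin k) (Fin pk) ℝ → (Fin pk ⊕ Fin k → ℝ) → Fin k → ℝ)
    (hscore : ∀ t L Hm v, score t L Hm v =
      (Matrix.fromCols (-Hm) (1 + Hm * L)).mulVec (v - Sum.elim t 0))
    -- q = last k coordinates of z, p̂ = (I, −Λ̂)(z − (τ̂,0)ᵀ)
    (qv : Ω → Fin k → ℝ) (hq : ∀ ω i, qv ω i = z ω (Sum.inr i))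
    (phat : ℕ → Ω → Fin pk → ℝ)
    (hphat : ∀ N ω i, phat N ω i =
      (z ω (Sum.inl i) - τhat N ω i) - ((Λhat N ω).mulVec (qv ω)) i) :
    -- exact linear representation in the parameter differences
    (∀ N ω, score (τhat N ω) (Λhat N ω) (Hhat N ω) (z ω)
        - score τfree Λfree H (z ω)
      = H.mulVec (τhat N ω - τfree)
        + H.mulVec ((Λhat N ω - Λfree).mulVec (qv ω))
        - (Hhat N ω - H).mulVec (phat N ω)) ∧
    -- O_p(N^{−1/2}) propagation
    ((∀ ε > (0 : ℝ), ∃ C : ℝ, ∀ᶠ N : ℕ in atTop,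
        μ {ω | C ≤ Real.sqrt N * (‖τhat N ω - τfree‖
          + ‖(Λhat N ω - Λfree).mulVec (qv ω)‖
          + ‖(Hhat N ω - H).mulVec (phat N ω)‖)} ≤ ENNReal.ofReal ε) →
      ∀ ε > (0 : ℝ), ∃ C : ℝ, ∀ᶠ N : ℕ in atTop,
        μ {ω | C ≤ Real.sqrt N *
          ‖score (τhat N ω) (Λhat N ω) (Hhat N ω) (z ω)
            - score τfree Λfree H (z ω)‖} ≤ ENNReal.ofReal ε) :=
  factor_score_linear_representation_general μ τfree Λfree H τhat Λhat Hhat z score hscore qv hq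
    phat hphat
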